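/- Let N ≥ 2 be an integer, m > 1, σ ∈ (−2, 0) and 1 < p < p_c(σ) := 1 − σ(m−1)/2, and consider the planar system ẏ = −(N−2)y − m y² − z, ż = z(σ + 2 − (m−p)y). Define the region S := {(y, z) : y < 0, z > 0, z > −(N−2)y − m y²}. Then: (i) at every point of S one has ẏ < 0 and ż > 0; (ii) S is positively invariant: any solution (y, z) with (y(t₀), z(t₀)) ∈ S stays in S for all later times in its maximal interval of existence; (iii) along any such solution, y(t) → −∞ and z(t) → +∞ as t approaches the right endpoint of the maximal interval of existence. -/

import Mathlib

open Real Filter Set Topology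

/-!
In `S` we have `ẏ < 0 < ż`, so a solution can leave `S` only through the parabola where
`h := z + (N - 2) y + m y² = -ẏ` vanishes; there `ḣ = ż > 0`, which rules out a first exit time.
Along a solution in `S`, `ż ≥ (σ + 2) z`; on an infinite interval this makes `z → ∞`, and then
`ẏ ≤ (N - 2)² / (4m) - z → -∞`. At a finite endpoint of a maximal solution, a bounded `y` would
bound `log z` (Grönwall), so `(y, z)` would converge and the solution could be continued by local
existence; hence `y → -∞`. Finally the `y`-terms cancel in `d/dt (log z - (m - p)/m · log (-y))`,
which is therefore bounded below while `z` stays bounded, forcing `z → ∞` as well.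
-/

/-- The interval `[t₀, b)` with `b` an extended real. -/
def solDom (t₀ : ℝ) (b : EReal) : Set ℝ := {t : ℝ | t₀ ≤ t ∧ (t : EReal) < b}

/-- A solution of the planar system `ẏ = -(N-2)y - m y² - z`,
`ż = z(σ + 2 - (m-p)y)` on the set `s`. -/
def IsSolYZ (N : ℕ) (m σ p : ℝ) (s : Set ℝ) (y z : ℝ → ℝ) : Prop :=
  ∀ t ∈ s,
    HasDerivWithinAt y (-(((N : ℝ)) - 2) * y t - m * y t ^ 2 - z t) s t ∧
    HasDerivWithinAt z (z t * (σ + 2 - (m - p) * y t)) s t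

/-- The region `S = {(y, z) : y < 0, z > 0, z > -(N-2)y - m y²}`. -/
def regionS (N : ℕ) (m : ℝ) : Set (ℝ × ℝ) :=
  {q : ℝ × ℝ | q.1 < 0 ∧ 0 < q.2 ∧ -(((N : ℝ)) - 2) * q.1 - m * q.1 ^ 2 < q.2}

section Calculus

variable {f f' : ℝ → ℝ} {D : Set ℝ}

theorem monotoneOn_of_forall_hasDerivWithinAt_nonneg (hD : Convex ℝ D)
    (hf : ∀ t ∈ D, HasDerivWithinAt f (f' t) D t) (hf' : ∀ t ∈ interior D, 0 ≤ f' t) :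
    MonotoneOn f D :=
  monotoneOn_of_hasDerivWithinAt_nonneg hD (fun t ht => (hf t ht).continuousWithinAt)
    (fun t ht => (hf t (interior_subset ht)).mono interior_subset) hf'

theorem antitoneOn_of_forall_hasDerivWithinAt_nonpos (hD : Convex ℝ D)
    (hf : ∀ t ∈ D, HasDerivWithinAt f (f' t) D t) (hf' : ∀ t ∈ interior D, f' t ≤ 0) :
    AntitoneOn f D :=
  antitoneOn_of_hasDerivWithinAt_nonpos hD (fun t ht => (hf t ht).continuousWithinAt)
    (fun t ht => (hf t (interior_subset ht)).mono interior_subset) hf'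

theorem mul_exp_le_of_mul_le_deriv {k a t : ℝ} (hD : Convex ℝ D)
    (hf : ∀ t ∈ D, HasDerivWithinAt f (f' t) D t) (hf' : ∀ t ∈ D, k * f t ≤ f' t)
    (ha : a ∈ D) (ht : t ∈ D) (hat : a ≤ t) :
    f a * exp (k * (t - a)) ≤ f t := by
  have hmono : MonotoneOn (fun t => f t * exp (-k * t)) D := by
    refine monotoneOn_of_forall_hasDerivWithinAt_nonneg hD
      (fun t ht => (hf t ht).mul ((hasDerivWithinAt_id t D).const_mul (-k)).exp) fun t ht => ?_
    have := hf' t (interior_subset ht)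
    simp only [id, mul_one]
    nlinarith [exp_pos (-k * t)]
  have key := hmono ha ht hat
  simp only at key
  calc f a * exp (k * (t - a)) = f a * exp (-k * a) * exp (k * t) := by
        rw [mul_assoc, ← exp_add]; ring_nf
    _ ≤ f t * exp (-k * t) * exp (k * t) := by gcongr
    _ = f t := by rw [mul_assoc, ← exp_add]; simp

theorem le_mul_exp_of_deriv_le_mul {k a t : ℝ} (hD : Convex ℝ D)
    (hf : ∀ t ∈ D, HasDerivWithinAt f (f' t) D t) (hf' : ∀ t ∈ D, f' t ≤ k * f t)
    (ha : a ∈ D) (ht : t ∈ D) (hat : a ≤ t) :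
    f t ≤ f a * exp (k * (t - a)) := by
  have := mul_exp_le_of_mul_le_deriv (f := -f) (f' := -f') hD (fun t ht => (hf t ht).neg)
    (fun t ht => by simpa using hf' t ht) ha ht hat
  simp only [Pi.neg_apply, neg_mul, neg_le_neg_iff] at this
  exact this

theorem tendsto_atBot_of_deriv_le_neg {a ε : ℝ} (hε : 0 < ε)
    (hf : ∀ t ∈ Ici a, HasDerivWithinAt f (f' t) (Ici a) t) (hf' : ∀ t ∈ Ici a, f' t ≤ -ε) :
    Tendsto f atTop atBot := by
  have hanti : AntitoneOn (fun t => f t + ε * t) (Ici a) :=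
    antitoneOn_of_forall_hasDerivWithinAt_nonpos (convex_Ici a)
      (fun t ht => (hf t ht).add ((hasDerivWithinAt_id t _).const_mul ε))
      fun t ht => by linarith [hf' t (interior_subset ht)]
  refine tendsto_atBot_mono' atTop (f₁ := fun t => f a + ε * a - ε * t) ?_ ?_
  · filter_upwards [eventually_ge_atTop a] with t ht
    have := hanti self_mem_Ici ht ht
    simp only at this
    linarith
  · exact tendsto_atBot_add_const_left _ _
      (tendsto_neg_atTop_atBot.comp (tendsto_id.const_mul_atTop hε))

theorem HasDerivWithinAt.nonpos_of_isMinOn_Icc {a c f₀' : ℝ} (hac : a < c)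
    (hf : HasDerivWithinAt f f₀' (Icc a c) c) (hmin : IsMinOn f (Icc a c) c) : f₀' ≤ 0 := by
  have hcone := sub_mem_posTangentConeAt_of_segment_subset
    ((convex_Icc a c).segment_subset (right_mem_Icc.2 hac.le) (left_mem_Icc.2 hac.le))
  have := hmin.localize.hasFDerivWithinAt_nonneg hf.hasFDerivWithinAt hcone
  rw [ContinuousLinearMap.toSpanSingleton_apply, smul_eq_mul] at this
  nlinarith

end Calculus

theorem exists_first_exit {X : Type*} [TopologicalSpace X] {γ : ℝ → X} {U : Set X} {a b : ℝ}
    (hU : IsOpen U) (hab : a ≤ b) (hγ : ContinuousOn γ (Icc a b)) (ha : γ a ∈ U) (hb : γ b ∉ U) :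
    ∃ c ∈ Ioc a b, γ c ∉ U ∧ ∀ t ∈ Ico a c, γ t ∈ U := by
  set K := Icc a b ∩ γ ⁻¹' Uᶜ
  have hK : IsClosed K := hγ.preimage_isClosed_of_isClosed isClosed_Icc hU.isClosed_compl
  have hKne : K.Nonempty := ⟨b, right_mem_Icc.2 hab, hb⟩
  have hKbdd : BddBelow K := ⟨a, fun t ht => ht.1.1⟩
  obtain ⟨⟨hca, hcb⟩, hc⟩ := hK.csInf_mem hKne hKbdd
  refine ⟨sInf K, ⟨hca.lt_of_ne fun h => hc (h ▸ ha), hcb⟩, hc, fun t ht => ?_⟩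
  by_contra hγt
  exact notMem_of_lt_csInf ht.2 hKbdd ⟨⟨ht.1, ht.2.le.trans hcb⟩, hγt⟩

section Order

variable {β : Type*} [LinearOrder β] {f : ℝ → β} {a b : ℝ}

theorem MonotoneOn.tendsto_nhdsLT_atTop (hf : MonotoneOn f (Ico a b))
    (hbdd : ¬BddAbove (f '' Ico a b)) : Tendsto f (𝓝[<] b) atTop := by
  refine tendsto_atTop.2 fun M => ?_
  obtain ⟨_, ⟨t, ht, rfl⟩, hM⟩ := not_bddAbove_iff.1 hbdd M
  filter_upwards [Ioo_mem_nhdsLT ht.2] with u hu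
  exact hM.le.trans (hf ht ⟨ht.1.trans hu.1.le, hu.2⟩ hu.1.le)

theorem AntitoneOn.tendsto_nhdsLT_atBot (hf : AntitoneOn f (Ico a b))
    (hbdd : ¬BddBelow (f '' Ico a b)) : Tendsto f (𝓝[<] b) atBot :=
  MonotoneOn.tendsto_nhdsLT_atTop (β := βᵒᵈ) hf hbdd

end Order

section ODE

variable {E : Type*} [NormedAddCommGroup E] [NormedSpace ℝ E] {v : E → E} {x : ℝ → E} {a b : ℝ}

theorem hasDerivWithinAt_Iic_of_tendsto_of_ode (hab : a < b) (hv : ContinuousAt v (x b))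
    (hx : ∀ t ∈ Ico a b, HasDerivWithinAt x (v (x t)) (Ico a b) t)
    (hxb : Tendsto x (𝓝[<] b) (𝓝 (x b))) : HasDerivWithinAt x (v (x b)) (Iic b) b := by
  have hderiv : ∀ t ∈ Ioo a b, HasDerivAt x (v (x t)) t := fun t ht =>
    (hx t (Ioo_subset_Ico_self ht)).hasDerivAt (Ico_mem_nhds ht.1 ht.2)
  refine hasDerivWithinAt_Iic_of_tendsto_deriv
    (fun t ht => (hderiv t ht).differentiableAt.differentiableWithinAt)
    (hxb.mono_left (nhdsWithin_mono _ Ioo_subset_Iio_self)) (Ioo_mem_nhdsLT hab) ?_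
  refine (hv.tendsto.comp hxb).congr' ?_
  filter_upwards [Ioo_mem_nhdsLT hab] with t ht
  exact (hderiv t ht).deriv.symm

theorem exists_ode_extension_of_tendsto [CompleteSpace E] {L : E} (hv : ContDiffAt ℝ 1 v L)
    (hab : a < b) (hx : ∀ t ∈ Ico a b, HasDerivWithinAt x (v (x t)) (Ico a b) t)
    (hL : Tendsto x (𝓝[<] b) (𝓝 L)) :
    ∃ b' > b, ∃ X : ℝ → E,
      (∀ t ∈ Ico a b', HasDerivWithinAt X (v (X t)) (Ico a b') t) ∧ EqOn X x (Ico a b) := by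
  obtain ⟨f, hfb, ε, hε, hf⟩ :=
    hv.exists_forall_mem_closedBall_exists_eq_forall_mem_Ioo_hasDerivAt₀ b
  set X : ℝ → E := fun t => if t < b then x t else f t
  have hXx : EqOn X x (Ico a b) := fun t ht => if_pos ht.2
  have hXf : EqOn X f (Ici b) := fun t ht => if_neg (not_lt.2 ht)
  refine ⟨b + ε, by linarith, X, fun t ht => ?_, hXx⟩
  rcases lt_or_ge t b with htb | hbt
  · have hnhds : Ico a b ∈ 𝓝[Ico a (b + ε)] t :=
      mem_nhdsWithin.2 ⟨Iio b, isOpen_Iio, htb, fun u hu => ⟨hu.2.1, hu.1⟩⟩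
    rw [hXx ⟨ht.1, htb⟩]
    exact ((hx t ⟨ht.1, htb⟩).congr hXx (hXx ⟨ht.1, htb⟩)).mono_of_mem_nhdsWithin hnhds
  · have hft : t ∈ Ioo (b - ε) (b + ε) := ⟨by linarith, ht.2⟩
    suffices HasDerivAt X (v (X t)) t from this.hasDerivWithinAt
    rcases hbt.eq_or_lt with hbt | hbt
    · subst hbt
      have hleft : HasDerivWithinAt X (v (X b)) (Iic b) b := by
        refine hasDerivWithinAt_Iic_of_tendsto_of_ode hab ?_ (fun u hu => ?_) ?_
        · rw [hXf self_mem_Ici, hfb]; exact hv.continuousAt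
        · rw [hXx hu]; exact (hx u hu).congr hXx (hXx hu)
        · rw [hXf self_mem_Ici, hfb]
          refine hL.congr' ?_
          filter_upwards [Ioo_mem_nhdsLT hab] with u hu
          exact (hXx (Ioo_subset_Ico_self hu)).symm
      have hright : HasDerivWithinAt X (v (X b)) (Ici b) b := by
        rw [hXf self_mem_Ici]; exact (hf b hft).hasDerivWithinAt.congr hXf (hXf self_mem_Ici)
      simpa [Iic_union_Ici] using hleft.union hright
    · have hXf' : X =ᶠ[𝓝 t] f := by
        filter_upwards [Ioi_mem_nhds hbt] with u hu using hXf (mem_Ici.2 (le_of_lt hu))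
      rw [hXf'.eq_of_nhds]
      exact (hf t hft).congr_of_eventuallyEq hXf'

end ODE

theorem solDom_top (t₀ : ℝ) : solDom t₀ ⊤ = Ici t₀ := by
  ext t; simp [solDom]

theorem solDom_coe (t₀ b : ℝ) : solDom t₀ b = Ico t₀ b := by
  ext t; simp [solDom]

theorem Icc_subset_solDom {t₀ t : ℝ} {b : EReal} (ht : t ∈ solDom t₀ b) :
    Icc t₀ t ⊆ solDom t₀ b :=
  fun _ hu => ⟨hu.1, (EReal.coe_le_coe_iff.2 hu.2).trans_lt ht.2⟩

theorem isOpen_regionS (N : ℕ) (m : ℝ) : IsOpen (regionS N m) :=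
  (isOpen_lt continuous_fst continuous_const).inter
    ((isOpen_lt continuous_const continuous_snd).inter (isOpen_lt (by fun_prop) continuous_snd))

theorem yDot_neg_of_mem_regionS {N : ℕ} {m : ℝ} {q : ℝ × ℝ} (hq : q ∈ regionS N m) :
    -(((N : ℝ)) - 2) * q.1 - m * q.1 ^ 2 - q.2 < 0 := by
  linarith [hq.2.2]

theorem zDot_pos {m σ p y z : ℝ} (hσ : 0 < σ + 2) (hmp : 0 ≤ m - p) (hy : y < 0) (hz : 0 < z) :
    0 < z * (σ + 2 - (m - p) * y) :=
  mul_pos hz (by nlinarith)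

def yzField (N : ℕ) (m σ p : ℝ) (q : ℝ × ℝ) : ℝ × ℝ :=
  (-(((N : ℝ)) - 2) * q.1 - m * q.1 ^ 2 - q.2, q.2 * (σ + 2 - (m - p) * q.1))

theorem contDiff_yzField (N : ℕ) (m σ p : ℝ) : ContDiff ℝ 1 (yzField N m σ p) := by
  unfold yzField; fun_prop

theorem isSolYZ_iff_hasDerivWithinAt {N : ℕ} {m σ p : ℝ} {s : Set ℝ} {y z : ℝ → ℝ} :
    IsSolYZ N m σ p s y z ↔
      ∀ t ∈ s, HasDerivWithinAt (fun t => (y t, z t)) (yzField N m σ p (y t, z t)) s t :=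
  ⟨fun h t ht => (h t ht).1.prodMk (h t ht).2, fun h t ht =>
    ⟨(ContinuousLinearMap.fst ℝ ℝ ℝ).hasFDerivAt.comp_hasDerivWithinAt t (h t ht),
      (ContinuousLinearMap.snd ℝ ℝ ℝ).hasFDerivAt.comp_hasDerivWithinAt t (h t ht)⟩⟩

namespace IsSolYZ

variable {N : ℕ} {m σ p : ℝ} {s : Set ℝ} {y z : ℝ → ℝ}

theorem mono {s' : Set ℝ} (hsol : IsSolYZ N m σ p s y z) (hs' : s' ⊆ s) :
    IsSolYZ N m σ p s' y z :=
  fun t ht => ⟨((hsol t (hs' ht)).1).mono hs', ((hsol t (hs' ht)).2).mono hs'⟩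

theorem continuousOn (hsol : IsSolYZ N m σ p s y z) : ContinuousOn (fun t => (y t, z t)) s :=
  fun t ht => (hsol t ht).1.continuousWithinAt.prodMk (hsol t ht).2.continuousWithinAt

theorem antitoneOn_y (hs : Convex ℝ s) (hsol : IsSolYZ N m σ p s y z)
    (hS : ∀ t ∈ interior s, (y t, z t) ∈ regionS N m) : AntitoneOn y s :=
  antitoneOn_of_forall_hasDerivWithinAt_nonpos hs (fun t ht => (hsol t ht).1)
    fun t ht => (yDot_neg_of_mem_regionS (hS t ht)).le

theorem monotoneOn_z (hσ : 0 < σ + 2) (hmp : 0 ≤ m - p) (hs : Convex ℝ s)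
    (hsol : IsSolYZ N m σ p s y z) (hS : ∀ t ∈ interior s, (y t, z t) ∈ regionS N m) :
    MonotoneOn z s :=
  monotoneOn_of_forall_hasDerivWithinAt_nonneg hs (fun t ht => (hsol t ht).2)
    fun t ht => (zDot_pos hσ hmp (hS t ht).1 (hS t ht).2.1).le

theorem mem_regionS_of_forall_Ico (hσ : 0 < σ + 2) (hmp : 0 ≤ m - p) {a c : ℝ} (hac : a < c)
    (hsol : IsSolYZ N m σ p (Icc a c) y z) (hS : ∀ t ∈ Ico a c, (y t, z t) ∈ regionS N m) :
    (y c, z c) ∈ regionS N m := by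
  have hSint : ∀ t ∈ interior (Icc a c), (y t, z t) ∈ regionS N m := by
    rw [interior_Icc]; exact fun t ht => hS t (Ioo_subset_Ico_self ht)
  have ha : a ∈ Icc a c := left_mem_Icc.2 hac.le
  have hc : c ∈ Icc a c := right_mem_Icc.2 hac.le
  have hyc : y c < 0 :=
    (hsol.antitoneOn_y (convex_Icc a c) hSint ha hc hac.le).trans_lt (hS a ⟨le_rfl, hac⟩).1
  have hzc : 0 < z c := (hS a ⟨le_rfl, hac⟩).2.1.trans_le
    (hsol.monotoneOn_z hσ hmp (convex_Icc a c) hSint ha hc hac.le)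
  refine ⟨hyc, hzc, ?_⟩
  set h : ℝ → ℝ := fun t => z t + ((N : ℝ) - 2) * y t + m * y t ^ 2 with hh
  have hpos : ∀ t ∈ Ico a c, 0 < h t := fun t ht => by
    have := (hS t ht).2.2; simp only [hh]; linarith
  by_contra hcS
  obtain ⟨hy, hz⟩ := hsol c hc
  have hderiv : HasDerivWithinAt h
      (z c * (σ + 2 - (m - p) * y c) - ((N : ℝ) - 2 + 2 * m * y c) * h c) (Icc a c) c := by
    refine ((hz.add (hy.const_mul ((N : ℝ) - 2))).add ((hy.pow 2).const_mul m)).congr_deriv ?_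
    simp only [hh]
    ring
  have hc_eq : h c = 0 := by
    refine le_antisymm (by simp only [hh]; linarith [not_lt.1 hcS]) ?_
    have := (hderiv.continuousWithinAt.mono Ico_subset_Icc_self).mem_closure
      (by rw [closure_Ico hac.ne]; exact hc)
      (show MapsTo h (Ico a c) (Ici 0) from fun t ht => (hpos t ht).le)
    rwa [closure_Ici] at this
  have hmin : IsMinOn h (Icc a c) c := isMinOn_iff.2 fun t ht => by
    rcases ht.2.eq_or_lt with rfl | htc
    · exact le_rfl
    · exact hc_eq.trans_le (hpos t ⟨ht.1, htc⟩).le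
  have := hderiv.nonpos_of_isMinOn_Icc hac hmin
  rw [hc_eq, mul_zero, sub_zero] at this
  exact this.not_gt (zDot_pos hσ hmp hyc hzc)

theorem mem_regionS (hσ : 0 < σ + 2) (hmp : 0 ≤ m - p) {a b : ℝ} (hab : a ≤ b)
    (hsol : IsSolYZ N m σ p (Icc a b) y z) (ha : (y a, z a) ∈ regionS N m) :
    (y b, z b) ∈ regionS N m := by
  by_contra hb
  obtain ⟨c, hc, hcS, hS⟩ :=
    exists_first_exit (isOpen_regionS N m) hab hsol.continuousOn ha hb
  exact hcS ((hsol.mono (Icc_subset_Icc_right hc.2)).mem_regionS_of_forall_Ico hσ hmp hc.1 hS)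

theorem tendsto_z_atTop (hσ : 0 < σ + 2) (hmp : 0 ≤ m - p) {a : ℝ}
    (hsol : IsSolYZ N m σ p (Ici a) y z) (hS : ∀ t ∈ Ici a, (y t, z t) ∈ regionS N m) :
    Tendsto z atTop atTop := by
  have hgrowth : ∀ t ∈ Ici a, z a * exp ((σ + 2) * (t - a)) ≤ z t := fun t ht =>
    mul_exp_le_of_mul_le_deriv (convex_Ici a) (fun t ht => (hsol t ht).2)
      (fun t ht => by
        nlinarith [mul_nonneg (mul_nonneg (hS t ht).2.1.le hmp) (neg_nonneg.2 (hS t ht).1.le)])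
      self_mem_Ici ht ht
  refine tendsto_atTop_mono' atTop ((eventually_ge_atTop a).mono hgrowth) ?_
  refine Tendsto.const_mul_atTop (hS a self_mem_Ici).2.1 (tendsto_exp_atTop.comp ?_)
  exact (tendsto_atTop_add_const_right _ _ tendsto_id).const_mul_atTop hσ

theorem tendsto_y_atBot (hm : 0 < m) {a : ℝ} (hsol : IsSolYZ N m σ p (Ici a) y z)
    (hz : Tendsto z atTop atTop) : Tendsto y atTop atBot := by
  obtain ⟨T, hT⟩ := eventually_atTop.1
    ((hz.eventually_ge_atTop (((N : ℝ) - 2) ^ 2 / (4 * m) + 1)).and (eventually_ge_atTop a))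
  have hTa : Ici T ⊆ Ici a := Ici_subset_Ici.2 (hT T le_rfl).2
  refine tendsto_atBot_of_deriv_le_neg one_pos (fun t ht => ((hsol t (hTa ht)).1.mono hTa))
    fun t ht => ?_
  have hparabola : ((N : ℝ) - 2) ^ 2 / (4 * m) + ((N : ℝ) - 2) * y t + m * y t ^ 2
      = ((N : ℝ) - 2 + 2 * m * y t) ^ 2 / (4 * m) := by
    field_simp; ring
  have : 0 ≤ ((N : ℝ) - 2) ^ 2 / (4 * m) + ((N : ℝ) - 2) * y t + m * y t ^ 2 :=
    hparabola ▸ by positivity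
  linarith [(hT t ht).1]

theorem bddAbove_z_of_bddBelow_y (hmp : 0 ≤ m - p) {a b : ℝ} (hab : a < b)
    (hsol : IsSolYZ N m σ p (Ico a b) y z)
    (hz : ∀ t ∈ Ico a b, 0 < z t) (hy : BddBelow (y '' Ico a b)) : BddAbove (z '' Ico a b) := by
  obtain ⟨L, hL⟩ := hy
  have hyL : ∀ t ∈ Ico a b, L ≤ y t := fun t ht => hL ⟨t, ht, rfl⟩
  set k := σ + 2 - (m - p) * L
  refine ⟨z a * exp (|k| * (b - a)), ?_⟩
  rintro _ ⟨t, ht, rfl⟩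
  calc z t ≤ z a * exp (k * (t - a)) :=
        le_mul_exp_of_deriv_le_mul (convex_Ico a b) (fun t ht => (hsol t ht).2)
          (fun t ht => by
            nlinarith [mul_nonneg (mul_nonneg (hz t ht).le hmp) (sub_nonneg.2 (hyL t ht))])
          ⟨le_rfl, hab⟩ ht ht.1
    _ ≤ z a * exp (|k| * (b - a)) := by
        refine mul_le_mul_of_nonneg_left (exp_le_exp.2 ?_) (hz a ⟨le_rfl, hab⟩).le
        exact (mul_le_mul_of_nonneg_right (le_abs_self k) (sub_nonneg.2 ht.1)).trans
          (mul_le_mul_of_nonneg_left (by linarith [ht.2]) (abs_nonneg k))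

theorem tendsto_y_nhdsLT_atBot (hσ : 0 < σ + 2) (hmp : 0 ≤ m - p) {a b : ℝ} (hab : a < b)
    (hsol : IsSolYZ N m σ p (Ico a b) y z) (hS : ∀ t ∈ Ico a b, (y t, z t) ∈ regionS N m)
    (hmax : ∀ b' > b, ¬∃ y' z' : ℝ → ℝ, IsSolYZ N m σ p (Ico a b') y' z' ∧
      EqOn y' y (Ico a b) ∧ EqOn z' z (Ico a b)) :
    Tendsto y (𝓝[<] b) atBot := by
  have hSint : ∀ t ∈ interior (Ico a b), (y t, z t) ∈ regionS N m :=
    fun t ht => hS t (interior_subset ht)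
  have hy := hsol.antitoneOn_y (convex_Ico a b) hSint
  have hz := hsol.monotoneOn_z hσ hmp (convex_Ico a b) hSint
  refine hy.tendsto_nhdsLT_atBot fun hyb => ?_
  have hzb := hsol.bddAbove_z_of_bddBelow_y hmp hab (fun t ht => (hS t ht).2.1) hyb
  have hne : (Ioo a b).Nonempty := nonempty_Ioo.2 hab
  have hylim := (hy.mono Ioo_subset_Ico_self).tendsto_nhdsWithin_Ioo_left hne
    (hyb.mono (image_mono Ioo_subset_Ico_self))
  have hzlim := (hz.mono Ioo_subset_Ico_self).tendsto_nhdsWithin_Ioo_left hne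
    (hzb.mono (image_mono Ioo_subset_Ico_self))
  obtain ⟨b', hb', X, hX, hXeq⟩ := exists_ode_extension_of_tendsto
    (contDiff_yzField N m σ p).contDiffAt hab (isSolYZ_iff_hasDerivWithinAt.1 hsol)
    (hylim.prodMk_nhds hzlim)
  exact hmax b' hb' ⟨fun t => (X t).1, fun t => (X t).2,
    isSolYZ_iff_hasDerivWithinAt.2 (by simpa using hX),
    fun t ht => congrArg Prod.fst (hXeq ht), fun t ht => congrArg Prod.snd (hXeq ht)⟩

theorem tendsto_z_nhdsLT_atTop (hσ : 0 < σ + 2) (hm : 0 < m) (hmp : 0 < m - p) {a b : ℝ}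
    (hab : a < b) (hsol : IsSolYZ N m σ p (Ico a b) y z)
    (hS : ∀ t ∈ Ico a b, (y t, z t) ∈ regionS N m) (hy : Tendsto y (𝓝[<] b) atBot) :
    Tendsto z (𝓝[<] b) atTop := by
  have hSint : ∀ t ∈ interior (Ico a b), (y t, z t) ∈ regionS N m :=
    fun t ht => hS t (interior_subset ht)
  refine (hsol.monotoneOn_z hσ hmp.le (convex_Ico a b) hSint).tendsto_nhdsLT_atTop ?_
  rintro ⟨Z, hZ⟩
  have ha : a ∈ Ico a b := ⟨le_rfl, hab⟩
  have hya : ∀ t ∈ Ico a b, y t ≤ y a :=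
    fun t ht => hsol.antitoneOn_y (convex_Ico a b) hSint ha ht ht.1
  -- `k` makes the `y`-terms cancel: `d/dt (log z - k log (-y)) = σ + 2 + k (N - 2) + k z / y ≥ c`.
  set k := (m - p) / m
  set c := σ + 2 + k * ((N : ℝ) - 2 - Z / -y a)
  have hG : MonotoneOn (fun t => log (z t) - k * log (-y t) - c * t) (Ico a b) := by
    refine monotoneOn_of_forall_hasDerivWithinAt_nonneg (convex_Ico a b)
      (fun t ht => (((hsol t ht).2.log (hS t ht).2.1.ne').sub
        (((hsol t ht).1.neg.log (neg_ne_zero.2 (hS t ht).1.ne)).const_mul k)).sub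
        ((hasDerivWithinAt_id t _).const_mul c)) fun t ht => ?_
    have ht' := interior_subset ht
    have hyt : y t < 0 := (hS t ht').1
    have hzt : 0 < z t := (hS t ht').2.1
    have hy0 : y a < 0 := (hS a ha).1
    have hratio : z t / -y t ≤ Z / -y a :=
      div_le_div₀ (hzt.le.trans (hZ ⟨t, ht', rfl⟩)) (hZ ⟨t, ht', rfl⟩) (neg_pos.2 hy0)
        (neg_le_neg (hya t ht'))
    have hderiv : z t * (σ + 2 - (m - p) * y t) / z t
        - k * (-(-((N : ℝ) - 2) * y t - m * y t ^ 2 - z t) / -y t) - c * 1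
        = k * (Z / -y a - z t / -y t) := by
      simp only [c, k]
      field_simp [hyt.ne, hzt.ne', hy0.ne]
      ring
    rw [Pi.neg_apply, hderiv]
    exact mul_nonneg (div_nonneg hmp.le hm.le) (sub_nonneg.2 hratio)
  have hlim : Tendsto (fun t => log (z a) - k * log (-y a) - c * a + k * log (-y t) + c * t)
      (𝓝[<] b) atTop := by
    have hlog := (tendsto_log_atTop.comp (tendsto_neg_atBot_atTop.comp hy)).const_mul_atTop
      (div_pos hmp hm)
    have hlin : Tendsto (fun t => c * t) (𝓝[<] b) (𝓝 (c * b)) :=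
      ((continuous_const_mul c).tendsto b).mono_left nhdsWithin_le_nhds
    exact (tendsto_atTop_add_const_left _ _ hlog).atTop_add hlin
  obtain ⟨t, hgt, ht⟩ := ((hlim.eventually_gt_atTop (log Z)).and (Ioo_mem_nhdsLT hab)).exists
  have ht' : t ∈ Ico a b := Ioo_subset_Ico_self ht
  have hGt := hG ha ht' ht.1.le
  have hzZ : log (z t) ≤ log Z := log_le_log (hS t ht').2.1 (hZ ⟨t, ht', rfl⟩)
  simp only at hGt hgt
  linarith

end IsSolYZ

theorem invariant_region_w_eq_zero_general
    (N : ℕ) (m σ p : ℝ)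
    (hm : 1 < m) (hσ1 : -2 < σ)
    (hp2 : p < 1 - σ * (m - 1) / 2) :
    (∀ q ∈ regionS N m,
      -(((N : ℝ)) - 2) * q.1 - m * q.1 ^ 2 - q.2 < 0 ∧
      0 < q.2 * (σ + 2 - (m - p) * q.1)) ∧
    (∀ (t₀ : ℝ) (b : EReal), (t₀ : EReal) < b → ∀ y z : ℝ → ℝ,
      IsSolYZ N m σ p (solDom t₀ b) y z → (y t₀, z t₀) ∈ regionS N m →
      ∀ t ∈ solDom t₀ b, (y t, z t) ∈ regionS N m) ∧
    (∀ (t₀ : ℝ) (b : EReal), (t₀ : EReal) < b → ∀ y z : ℝ → ℝ,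
      IsSolYZ N m σ p (solDom t₀ b) y z → (y t₀, z t₀) ∈ regionS N m →
      (∀ b' : EReal, b < b' →
        ¬ ∃ y' z' : ℝ → ℝ, IsSolYZ N m σ p (solDom t₀ b') y' z' ∧
          Set.EqOn y' y (solDom t₀ b) ∧ Set.EqOn z' z (solDom t₀ b)) →
      ((b = ⊤ → Tendsto y atTop atBot ∧ Tendsto z atTop atTop) ∧
       (∀ br : ℝ, b = (br : EReal) →
         Tendsto y (𝓝[<] br) atBot ∧ Tendsto z (𝓝[<] br) atTop))) := by
  have hσ : 0 < σ + 2 := by linarith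
  have hmp : 0 < m - p := by nlinarith
  have hinv : ∀ (t₀ : ℝ) (b : EReal) (y z : ℝ → ℝ), IsSolYZ N m σ p (solDom t₀ b) y z →
      (y t₀, z t₀) ∈ regionS N m → ∀ t ∈ solDom t₀ b, (y t, z t) ∈ regionS N m :=
    fun t₀ b y z hsol h0 t ht => (hsol.mono (Icc_subset_solDom ht)).mem_regionS hσ hmp.le ht.1 h0
  refine ⟨fun q hq => ⟨yDot_neg_of_mem_regionS hq, zDot_pos hσ hmp.le hq.1 hq.2.1⟩,
    fun t₀ b _ => hinv t₀ b, fun t₀ b hb y z hsol h0 hmax => ?_⟩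
  have hS := hinv t₀ b y z hsol h0
  refine ⟨fun hb_top => ?_, fun br hbr => ?_⟩
  · subst hb_top
    rw [solDom_top] at hsol hS
    have hz := hsol.tendsto_z_atTop hσ hmp.le hS
    exact ⟨hsol.tendsto_y_atBot (by linarith) hz, hz⟩
  · subst hbr
    rw [solDom_coe] at hsol hS hmax
    have hab : t₀ < br := EReal.coe_lt_coe_iff.1 hb
    have hy := hsol.tendsto_y_nhdsLT_atBot hσ hmp.le hab hS fun b' hb' => by
      simpa [solDom_coe] using hmax b' (EReal.coe_lt_coe_iff.2 hb')
    exact ⟨hy, hsol.tendsto_z_nhdsLT_atTop hσ (by linarith) hmp hab hS hy⟩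

/-- **Invariant region analysis in the plane `{w = 0}`.**
(i) the vector field points down-up (`ẏ < 0`, `ż > 0`) in `S`; (ii) `S` is
positively invariant; (iii) along any maximal solution starting in `S`,
`y → -∞` and `z → +∞` at the right endpoint of the maximal interval. -/
theorem invariant_region_w_eq_zero
    (N : ℕ) (hN : 2 ≤ N) (m σ p : ℝ)
    (hm : 1 < m) (hσ1 : -2 < σ) (hσ2 : σ < 0)
    (hp1 : 1 < p) (hp2 : p < 1 - σ * (m - 1) / 2) :
    (∀ q ∈ regionS N m,
      -(((N : ℝ)) - 2) * q.1 - m * q.1 ^ 2 - q.2 < 0 ∧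
      0 < q.2 * (σ + 2 - (m - p) * q.1)) ∧
    (∀ (t₀ : ℝ) (b : EReal), (t₀ : EReal) < b → ∀ y z : ℝ → ℝ,
      IsSolYZ N m σ p (solDom t₀ b) y z → (y t₀, z t₀) ∈ regionS N m →
      ∀ t ∈ solDom t₀ b, (y t, z t) ∈ regionS N m) ∧
    (∀ (t₀ : ℝ) (b : EReal), (t₀ : EReal) < b → ∀ y z : ℝ → ℝ,
      IsSolYZ N m σ p (solDom t₀ b) y z → (y t₀, z t₀) ∈ regionS N m →
      (∀ b' : EReal, b < b' →
        ¬ ∃ y' z' : ℝ → ℝ, IsSolYZ N m σ p (solDom t₀ b') y' z' ∧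
          Set.EqOn y' y (solDom t₀ b) ∧ Set.EqOn z' z (solDom t₀ b)) →
      ((b = ⊤ → Tendsto y atTop atBot ∧ Tendsto z atTop atTop) ∧
       (∀ br : ℝ, b = (br : EReal) →
         Tendsto y (𝓝[<] br) atBot ∧ Tendsto z (𝓝[<] br) atTop))) :=
  invariant_region_w_eq_zero_general N m σ p hm hσ1 hp2
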